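/- arXiv:2501.11517 — 9 statements merged into one kernel-verified Lean document; each statement's English description precedes it below -/
import Mathlib

section
/- An Archimedean vector lattice X has the countable supremum property if and only if every order bounded disjoint subset of X \ {0} is countable. -/
/-!
(⇒) If `E ⊆ [0, u]` is an uncountable disjoint family of positive elements, let `S` be the set
of finite sums of elements of `E`; these are suprema, hence bounded by `u`. By the Archimedean
property `upperBounds S - S` has infimum `0`, yet `w - ∑ F` dominates every `e ∈ E \ F`. A
countable subset involves only countably many elements of `E`, and any other `e ∈ E` is a
nonzero lower bound of it.

(⇐) Let `inf A = 0` and `u ∈ A`. For each `n`, Zorn gives a maximal disjoint family `Dₙ` of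
nonzero elements each lying below some `(u / n - a)⁺` with `a ∈ A`; it is countable. Let `B`
consist of `u` and these witnesses `a`. If `v ≥ 0` were a nonzero lower bound of `B`, the
Archimedean property gives `n` with `r = (v - u / n)⁺` not disjoint from `u / n`. As
`inf A = 0`, `r` meets some `(u / n - a)⁺`, hence by maximality some `d ∈ Dₙ`; but
`d ≤ (u / n - v)⁺`, which is disjoint from `r`.
-/

/-- The countable supremum property: every set with infimum `0` has a countable
subset with infimum `0`. -/
def CountableSupProperty (X : Type*) [AddCommGroup X] [Lattice X] : Prop :=
  ∀ A : Set X, IsGLB A 0 → ∃ B ⊆ A, B.Countable ∧ IsGLB B 0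

open scoped Pointwise

theorem exists_maximal_pairwise_subset {α : Type*} (r : α → α → Prop) (P : Set α) :
    ∃ D, Maximal (fun D => D ⊆ P ∧ D.Pairwise r) D :=
  zorn_subset _ fun c hc hchain =>
    ⟨⋃₀ c, ⟨Set.sUnion_subset fun _ hD => (hc hD).1,
      (Set.pairwise_sUnion hchain.directedOn).mpr fun _ hD => (hc hD).2⟩,
      fun _ => Set.subset_sUnion_of_mem⟩

theorem Maximal.exists_inf_ne_zero {α : Type*} [Lattice α] [Zero α] {P D : Set α}
    (hD : Maximal (fun D => D ⊆ P ∧ D.Pairwise (· ⊓ · = 0)) D) {x : α} (hxP : x ∈ P)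
    (hx : x ≠ 0) : ∃ d ∈ D, x ⊓ d ≠ 0 := by
  by_contra! h
  have hxD : x ∈ D := hD.mem_of_prop_insert ⟨Set.insert_subset hxP hD.prop.1,
    hD.prop.2.insert fun d hd _ => ⟨h d hd, by rw [inf_comm]; exact h d hd⟩⟩
  exact hx (by simpa using h x hxD)

def BddDisjointSetsCountable (X : Type*) [AddCommGroup X] [Lattice X] : Prop :=
  ∀ E : Set X, (∀ e ∈ E, 0 < e) → E.Pairwise (· ⊓ · = 0) → BddAbove E → E.Countable

section LatticeOrderedGroup

variable {X : Type*} [AddCommGroup X] [Lattice X] [AddLeftMono X]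

theorem inf_add_le_inf_add_inf {a b c : X} (ha : 0 ≤ a) (hb : 0 ≤ b) (hc : 0 ≤ c) :
    a ⊓ (b + c) ≤ a ⊓ b + a ⊓ c := by
  have : a ⊓ (b + c) - a ⊓ c ≤ a ⊓ b := by
    rw [sub_inf]
    refine sup_le (le_trans (sub_nonpos.mpr inf_le_left) (le_inf ha hb)) (le_inf ?_ ?_)
    · exact le_trans (sub_le_sub_right inf_le_left c) (sub_le_self a hc)
    · exact sub_le_iff_le_add.mpr inf_le_right
  exact sub_le_iff_le_add.mp this

theorem inf_add_eq_zero {a b c : X} (ha : 0 ≤ a) (hb : 0 ≤ b) (hc : 0 ≤ c)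
    (hab : a ⊓ b = 0) (hac : a ⊓ c = 0) : a ⊓ (b + c) = 0 :=
  le_antisymm (by simpa [hab, hac] using inf_add_le_inf_add_inf ha hb hc)
    (le_inf ha (add_nonneg hb hc))

theorem inf_nsmul_eq_zero {a b : X} (ha : 0 ≤ a) (hb : 0 ≤ b) (h : a ⊓ b = 0) (n : ℕ) :
    a ⊓ n • b = 0 := by
  induction n with
  | zero => simpa using inf_eq_right.mpr ha
  | succ n ih => rw [succ_nsmul]; exact inf_add_eq_zero ha (nsmul_nonneg hb n) hb ih h

theorem inf_sum_eq_zero {a : X} (ha : 0 ≤ a) {F : Finset X} (hF : ∀ x ∈ F, 0 ≤ x)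
    (h : ∀ x ∈ F, a ⊓ x = 0) : a ⊓ ∑ x ∈ F, x = 0 := by
  classical
  induction F using Finset.induction_on with
  | empty => simpa using inf_eq_right.mpr ha
  | insert e F he ih =>
    rw [Finset.sum_insert he]
    simp only [Finset.mem_insert, forall_eq_or_imp] at hF h
    exact inf_add_eq_zero ha hF.1 (Finset.sum_nonneg hF.2) h.1 (ih hF.2 h.2)

theorem sum_le_of_pairwise_inf_eq_zero {u : X} (hu : 0 ≤ u) {F : Finset X}
    (hF : ∀ x ∈ F, 0 ≤ x ∧ x ≤ u) (hdisj : (F : Set X).Pairwise (· ⊓ · = 0)) :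
    ∑ x ∈ F, x ≤ u := by
  classical
  induction F using Finset.induction_on with
  | empty => simpa using hu
  | insert e F he ih =>
    rw [Finset.coe_insert, Set.pairwise_insert_of_notMem (Finset.mem_coe.not.mpr he)] at hdisj
    simp only [Finset.mem_insert, forall_eq_or_imp] at hF
    have hinf : e ⊓ ∑ x ∈ F, x = 0 := inf_sum_eq_zero hF.1.1 (fun x hx => (hF.2 x hx).1)
      (fun x hx => (hdisj.2 x hx).1)
    rw [Finset.sum_insert he, ← inf_add_sup, hinf, zero_add]
    exact sup_le hF.1.2 (ih hF.2 hdisj.1)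

theorem inf_eq_zero_of_le_posPart_sub {a b x y : X} (hx : 0 ≤ x) (hy : 0 ≤ y)
    (hxa : x ≤ (a - b)⁺) (hyb : y ≤ (b - a)⁺) : x ⊓ y = 0 := by
  refine le_antisymm ?_ (le_inf hx hy)
  calc x ⊓ y ≤ (a - b)⁺ ⊓ (a - b)⁻ := inf_le_inf hxa (by rwa [negPart_def, neg_sub, ← posPart_def])
    _ = 0 := posPart_inf_negPart_eq_zero _

theorem exists_inf_posPart_sub_ne_zero {A : Set X} (hA : IsGLB A 0) {r t : X}
    (hr : 0 ≤ r) (ht : 0 ≤ t) (h : r ⊓ t ≠ 0) : ∃ a ∈ A, r ⊓ (t - a)⁺ ≠ 0 := by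
  by_contra! h'
  refine h (le_antisymm (hA.2 fun a ha => ?_) (le_inf hr ht))
  calc r ⊓ t ≤ r ⊓ ((t - a)⁺ + a) := inf_le_inf_left _ (sub_le_iff_le_add.mp (le_posPart _))
    _ ≤ r ⊓ (t - a)⁺ + r ⊓ a := inf_add_le_inf_add_inf hr (posPart_nonneg _) (hA.1 ha)
    _ ≤ a := by rw [h' a ha, zero_add]; exact inf_le_right

theorem isGLB_upperBounds_sub_self
    (harch : ∀ x y : X, (∀ n : ℕ, n • x ≤ y) → x ≤ 0) {S : Set X}
    (hne : S.Nonempty) (hbdd : BddAbove S) : IsGLB (upperBounds S - S) 0 := by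
  refine ⟨?_, fun t ht => ?_⟩
  · rintro _ ⟨w, hw, s, hs, rfl⟩
    exact sub_nonneg.mpr (hw hs)
  obtain ⟨s₀, hs₀⟩ := hne
  obtain ⟨u, hu⟩ := hbdd
  have hstep : ∀ w ∈ upperBounds S, w - t ∈ upperBounds S := fun w hw s hs =>
    le_sub_comm.mp (ht ⟨w, hw, s, hs, rfl⟩)
  have hiter : ∀ n : ℕ, u - n • t ∈ upperBounds S := by
    intro n
    induction n with
    | zero => simpa using hu
    | succ n ih => simpa [succ_nsmul, sub_sub] using hstep _ ih
  exact harch t (u - s₀) fun n => le_sub_comm.mp (hiter n hs₀)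

theorem bddDisjointSetsCountable_iff : BddDisjointSetsCountable X ↔
    ∀ D : Set X, (0 : X) ∉ D → D.Pairwise (fun x y => |x| ⊓ |y| = 0) →
      (∃ u : X, D ⊆ Set.Icc (-u) u) → D.Countable := by
  have abs_ne_zero_of_ne {x : X} (hx : x ≠ 0) : |x| ≠ 0 := fun h =>
    hx (le_antisymm (h ▸ le_abs_self x) (neg_nonpos.mp (h ▸ neg_le_abs x)))
  constructor
  · rintro h D hD0 hdisj ⟨u, hu⟩
    have hinj : Set.InjOn abs D := fun x hx y hy hxy => by
      by_contra hne
      exact abs_ne_zero_of_ne (ne_of_mem_of_not_mem hx hD0) (by simpa [hxy] using hdisj hx hy hne)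
    refine Set.countable_of_injective_of_countable_image hinj (h _ ?_ ?_ ⟨u, ?_⟩)
    · rintro _ ⟨x, hx, rfl⟩
      exact (abs_nonneg x).lt_of_ne' (abs_ne_zero_of_ne (ne_of_mem_of_not_mem hx hD0))
    · rintro _ ⟨x, hx, rfl⟩ _ ⟨y, hy, rfl⟩ hxy
      exact hdisj hx hy (fun h => hxy (h ▸ rfl))
    · rintro _ ⟨x, hx, rfl⟩
      exact abs_le'.mpr ⟨(hu hx).2, neg_le.mp (hu hx).1⟩
  · rintro h E hpos hdisj ⟨u, hu⟩
    refine h E (fun h0 => (hpos 0 h0).false) ?_ ⟨|u|, fun e he => ⟨?_, ?_⟩⟩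
    · intro x hx y hy hxy
      rw [abs_of_nonneg (hpos x hx).le, abs_of_nonneg (hpos y hy).le]
      exact hdisj hx hy hxy
    · exact (neg_nonpos.mpr (abs_nonneg u)).trans (hpos e he).le
    · exact (hu he).trans (le_abs_self u)

theorem CountableSupProperty.bddDisjointSetsCountable
    (harch : ∀ x y : X, (∀ n : ℕ, n • x ≤ y) → x ≤ 0) (hcsp : CountableSupProperty X) :
    BddDisjointSetsCountable X := by
  classical
  rintro E hpos hdisj ⟨u, hu⟩
  by_contra hunc
  set S : Set X := (fun F : Finset X => ∑ x ∈ F, x) '' {F | ↑F ⊆ E}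
  have hbdd : BddAbove S := ⟨u ⊔ 0, by
    rintro _ ⟨F, hF, rfl⟩
    exact sum_le_of_pairwise_inf_eq_zero le_sup_right
      (fun x hx => ⟨(hpos x (hF hx)).le, (hu (hF hx)).trans le_sup_left⟩) (hdisj.mono hF)⟩
  have hS : S.Nonempty := ⟨0, ∅, by simp, by simp⟩
  have hcofinite : ∀ b ∈ upperBounds S - S, ∃ F : Finset X, ∀ e ∈ E, e ∉ F → e ≤ b := by
    rintro _ ⟨w, hw, _, ⟨F, hF, rfl⟩, rfl⟩
    refine ⟨F, fun e he heF => le_sub_iff_add_le.mpr ?_⟩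
    simpa [Finset.sum_insert heF, add_comm] using
      hw ⟨insert e F, by simpa using Set.insert_subset he hF, rfl⟩
  obtain ⟨B, hBA, hBc, hB⟩ := hcsp _ (isGLB_upperBounds_sub_self harch hS hbdd)
  choose! F hF using fun b hb => hcofinite b (hBA hb)
  obtain ⟨e, he, heF⟩ : (E \ ⋃ b ∈ B, (F b : Set X)).Nonempty :=
    Set.nonempty_of_not_subset fun h =>
      hunc ((hBc.biUnion fun b _ => (F b).countable_toSet).mono h)
  simp only [Set.mem_iUnion, Finset.mem_coe, not_exists] at heF
  exact (hpos e he).not_ge (hB.2 fun b hb => hF b hb e he (heF b hb))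

end LatticeOrderedGroup

section VectorLattice

variable {X : Type*} [AddCommGroup X] [Lattice X] [AddLeftMono X] [Module ℝ X]
  [PosSMulMono ℝ X]

theorem exists_posPart_sub_inv_smul_inf_ne_zero
    (harch : ∀ x y : X, (∀ n : ℕ, n • x ≤ y) → x ≤ 0) {u w : X} (hw0 : 0 ≤ w) (hwu : w ≤ u)
    (hw : w ≠ 0) : ∃ n : ℕ, (w - (n : ℝ)⁻¹ • u)⁺ ⊓ (n : ℝ)⁻¹ • u ≠ 0 := by
  by_contra! h
  refine hw (le_antisymm (harch w u fun n => ?_) hw0)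
  rcases eq_or_ne n 0 with rfl | hn
  · simpa using hw0.trans hwu
  have hnu : n • ((n : ℝ)⁻¹ • u) = u := by
    rw [← Nat.cast_smul_eq_nsmul ℝ, smul_smul, mul_inv_cancel₀ (Nat.cast_ne_zero.mpr hn),
      one_smul]
  have hu : 0 ≤ (n : ℝ)⁻¹ • u := smul_nonneg (by positivity) (hw0.trans hwu)
  have hdisj : (w - (n : ℝ)⁻¹ • u)⁺ ⊓ u = 0 := by
    simpa [hnu] using inf_nsmul_eq_zero (posPart_nonneg _) hu (h n) n
  have hle : (w - (n : ℝ)⁻¹ • u)⁺ ≤ u :=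
    sup_le ((sub_le_self w hu).trans hwu) (hw0.trans hwu)
  rw [inf_eq_left.mpr hle, posPart_eq_zero, sub_nonpos] at hdisj
  simpa [hnu] using nsmul_le_nsmul_right hdisj n

theorem BddDisjointSetsCountable.exists_countable_isGLB_zero
    (harch : ∀ x y : X, (∀ n : ℕ, n • x ≤ y) → x ≤ 0) (hX : BddDisjointSetsCountable X)
    {A : Set X} (hA : IsGLB A 0) {u : X} (hu : u ∈ A) :
    ∃ B ⊆ A, B.Countable ∧ IsGLB B 0 := by
  have hu0 : 0 ≤ u := hA.1 hu
  set t : ℕ → X := fun n => (n : ℝ)⁻¹ • u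
  have ht0 n : 0 ≤ t n := smul_nonneg (by positivity) hu0
  set P : ℕ → Set X := fun n => {d | 0 < d ∧ ∃ a ∈ A, d ≤ (t n - a)⁺}
  choose D hD using fun n => exists_maximal_pairwise_subset (· ⊓ · = 0) (P n)
  have hDc n : (D n).Countable := by
    refine hX _ (fun d hd => ((hD n).prop.1 hd).1) (hD n).prop.2 ⟨t n, fun d hd => ?_⟩
    obtain ⟨-, a, ha, hda⟩ := (hD n).prop.1 hd
    exact hda.trans (sup_le (sub_le_self _ (hA.1 ha)) (ht0 n))
  choose! g hgA hg using fun n d (hd : d ∈ D n) => ((hD n).prop.1 hd).2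
  set B := insert u (⋃ n, g n '' D n)
  have hBA : B ⊆ A := by
    refine Set.insert_subset hu (Set.iUnion_subset fun n => ?_)
    rintro _ ⟨d, hd, rfl⟩
    exact hgA n d hd
  refine ⟨B, hBA, (Set.countable_iUnion fun n => (hDc n).image _).insert u,
    fun b hb => hA.1 (hBA hb), fun v hv => ?_⟩
  have hw : v⁺ ∈ lowerBounds B := fun b hb => sup_le (hv hb) (hA.1 (hBA hb))
  rw [← posPart_eq_zero]
  by_contra hv0
  obtain ⟨n, hn⟩ := exists_posPart_sub_inv_smul_inf_ne_zero harch (posPart_nonneg v)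
    (hw (Set.mem_insert u _)) hv0
  obtain ⟨a, ha, hra⟩ := exists_inf_posPart_sub_ne_zero hA (posPart_nonneg _) (ht0 n) hn
  have hr0 : 0 ≤ (v⁺ - t n)⁺ ⊓ (t n - a)⁺ := le_inf (posPart_nonneg _) (posPart_nonneg _)
  obtain ⟨d, hd, hrd⟩ := (hD n).exists_inf_ne_zero ⟨hr0.lt_of_ne' hra, a, ha, inf_le_right⟩ hra
  have hgd : v⁺ ≤ g n d := hw (Set.mem_insert_of_mem _ (Set.mem_iUnion.2 ⟨n, d, hd, rfl⟩))
  exact hrd (inf_eq_zero_of_le_posPart_sub hr0 ((hD n).prop.1 hd).1.le inf_le_left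
    ((hg n d hd).trans (posPart_mono (sub_le_sub_left hgd _))))

theorem countableSupProperty_iff_bddDisjointSetsCountable
    (harch : ∀ x y : X, (∀ n : ℕ, n • x ≤ y) → x ≤ 0) :
    CountableSupProperty X ↔ BddDisjointSetsCountable X := by
  refine ⟨CountableSupProperty.bddDisjointSetsCountable harch, fun hX A hA => ?_⟩
  rcases A.eq_empty_or_nonempty with rfl | ⟨u, hu⟩
  · exact ⟨∅, subset_rfl, Set.countable_empty, hA⟩
  · exact hX.exists_countable_isGLB_zero harch hA hu

end VectorLattice

theorem stmt4 {X : Type*} [AddCommGroup X] [Lattice X]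
    [CovariantClass X X (· + ·) (· ≤ ·)] [Module ℝ X] [PosSMulMono ℝ X]
    (harch : ∀ x y : X, (∀ n : ℕ, n • x ≤ y) → x ≤ 0) :
    CountableSupProperty X ↔
      ∀ D : Set X, (0 : X) ∉ D →
        (∀ x ∈ D, ∀ y ∈ D, x ≠ y → |x| ⊓ |y| = 0) →
        (∃ u : X, D ⊆ Set.Icc (-u) u) →
        D.Countable :=
  (countableSupProperty_iff_bddDisjointSetsCountable harch).trans bddDisjointSetsCountable_iff
end

section
/- Let B be a Boolean algebra. Then B satisfies the countable disjoint refinement property Rp(ω) if and only if for every b > 0 the Boolean algebra [0,b] does not have a countable π-base. -/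
/-- The interval Boolean algebra `[⊥, b]` has a countable π-base. -/
def HasCountablePiBaseBelow {B : Type*} [BooleanAlgebra B] (b : B) : Prop :=
  ∃ A : Set B, A.Countable ∧ (∀ a ∈ A, ⊥ < a ∧ a ≤ b) ∧
    ∀ c : B, ⊥ < c → c ≤ b → ∃ a ∈ A, a ≤ c

/-- `Rp(ω)`: every countable family of nonzero elements has a disjoint refinement. -/
def RpOmega (B : Type*) [BooleanAlgebra B] : Prop :=
  ∀ c : ℕ → B, (∀ n, c n ≠ ⊥) →
    ∃ d : ℕ → B, (∀ n, d n ≠ ⊥ ∧ d n ≤ c n) ∧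
      ∀ m n : ℕ, m ≠ n → d m ⊓ d n = ⊥

open Classical in
/-- One recursion step: pick an element below `c k \ q` avoiding all `c n \ q`. -/
noncomputable def rpStep {B : Type*} [BooleanAlgebra B] (c : ℕ → B)
    (E : (x : B) → ⊥ < x → (ℕ → B) → B) (q : B) (k : ℕ) : B :=
  if h : ⊥ < c k \ q then E _ h (fun n => c n \ q) else ⊥

/-- Partial suprema of the recursively chosen elements. -/
noncomputable def rpSup {B : Type*} [BooleanAlgebra B] (c : ℕ → B)
    (E : (x : B) → ⊥ < x → (ℕ → B) → B) : ℕ → B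
  | 0 => ⊥
  | (k + 1) => rpSup c E k ⊔ rpStep c E (rpSup c E k) k

theorem stmt8 {B : Type*} [BooleanAlgebra B] :
    RpOmega B ↔ ∀ b : B, ⊥ < b → ¬ HasCountablePiBaseBelow b := by
  constructor
  · rintro hRp b hb ⟨A, hAc, hA1, hA2⟩
    obtain ⟨a0, ha0, -⟩ := hA2 b hb le_rfl
    obtain ⟨f, hf⟩ := Set.Countable.exists_eq_range hAc ⟨a0, ha0⟩
    have hmem : ∀ n, f n ∈ A := by intro n; rw [hf]; exact ⟨n, rfl⟩
    obtain ⟨d, hd1, hd2⟩ := hRp (fun n => f (n / 2))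
      (fun n => ((hA1 _ (hmem _)).1).ne')
    have hd0 : ⊥ < d 0 := ((hd1 0).1).bot_lt
    have hd0b : d 0 ≤ b := le_trans (hd1 0).2 (hA1 _ (hmem 0)).2
    obtain ⟨a, haA, hale⟩ := hA2 (d 0) hd0 hd0b
    rw [hf] at haA
    obtain ⟨m, rfl⟩ := haA
    have hdiv : (2 * m + 1) / 2 = m := by omega
    have h1 : d (2 * m + 1) ≤ d 0 := by
      refine le_trans (hd1 (2 * m + 1)).2 ?_
      rw [hdiv]; exact hale
    have h2 : d (2 * m + 1) ⊓ d 0 = ⊥ := hd2 _ 0 (by omega)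
    exact (hd1 (2 * m + 1)).1 (by rw [← inf_eq_left.mpr h1, h2])
  · intro H c hc
    have aux : ∀ x : B, ⊥ < x → ∀ T : ℕ → B,
        ∃ e, ⊥ < e ∧ e ≤ x ∧ ∀ n, T n ≤ e → T n = ⊥ := by
      intro x hx T
      by_contra h
      push_neg at h
      refine H x hx ⟨{a | (∃ n, T n = a) ∧ ⊥ < a ∧ a ≤ x}, ?_, fun a ha => ha.2, ?_⟩
      · exact Set.Countable.mono (fun a ha => ha.1) (Set.countable_range T)
      · intro e he hex
        obtain ⟨n, hTn, hne⟩ := h e he hex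
        exact ⟨T n, ⟨⟨n, rfl⟩, hne.bot_lt, hTn.trans hex⟩, hTn⟩
    choose E hE1 hE2 hE3 using aux
    set p : ℕ → B := rpSup c E with hp
    -- invariant: no partial sup covers any c n
    have hinv : ∀ k n, c n \ p k ≠ ⊥ := by
      intro k
      induction k with
      | zero =>
        intro n
        rw [show p 0 = ⊥ from rfl, sdiff_bot]
        exact hc n
      | succ k ih =>
        intro n hbot
        have hk : ⊥ < c k \ p k := (ih k).bot_lt
        have hstep : rpStep c E (p k) k = E _ hk (fun n => c n \ p k) := by
          rw [rpStep, dif_pos hk]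
        have hps : p (k + 1) = p k ⊔ rpStep c E (p k) k := rfl
        rw [hps, ← sdiff_sdiff] at hbot
        have h3 : c n \ p k ≤ rpStep c E (p k) k := sdiff_eq_bot_iff.mp hbot
        rw [hstep] at h3
        exact ih n (hE3 _ hk (fun n => c n \ p k) n h3)
    have hek : ∀ k, ⊥ < rpStep c E (p k) k ∧ rpStep c E (p k) k ≤ c k \ p k := by
      intro k
      have hk : ⊥ < c k \ p k := (hinv k k).bot_lt
      rw [show rpStep c E (p k) k = E _ hk (fun n => c n \ p k) from by
        rw [rpStep, dif_pos hk]]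
      exact ⟨hE1 _ hk _, hE2 _ hk _⟩
    have hmono : Monotone p := monotone_nat_of_le_succ fun k => le_sup_left
    refine ⟨fun k => rpStep c E (p k) k, fun k => ⟨(hek k).1.ne', (hek k).2.trans sdiff_le⟩, ?_⟩
    have key : ∀ m n : ℕ, m < n → rpStep c E (p m) m ⊓ rpStep c E (p n) n = ⊥ := by
      intro m n hmn
      have h1 : rpStep c E (p m) m ≤ p n := by
        have h0 : rpStep c E (p m) m ≤ p (m + 1) := le_sup_right
        exact h0.trans (hmono hmn)
      have h2 : rpStep c E (p n) n ≤ c n \ p n := (hek n).2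
      have hd : Disjoint (p n) (c n \ p n) := disjoint_sdiff_self_right
      exact disjoint_iff.mp (hd.mono h1 h2)
    intro m n hmn
    rcases lt_or_gt_of_ne hmn with h | h
    · exact key m n h
    · rw [inf_comm]; exact key n m h
end

section
/- Let B be a Boolean algebra without atoms such that for every b > 0 the interval algebra [0,b] has no countable π-base. Then every countable family {b_n : n ∈ ℕ} ⊆ B \ {0} admits a disjoint refinement: there exist pairwise disjoint nonzero a_n with a_n ≤ b_n for every n. -/
theorem stmt10 {B : Type*} [BooleanAlgebra B]
    (hatomless : ∀ b : B, ¬ IsAtom b)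
    (hnopibase : ∀ b : B, ⊥ < b → ¬ HasCountablePiBaseBelow b) :
    ∀ b : ℕ → B, (∀ n, b n ≠ ⊥) →
      ∃ a : ℕ → B, (∀ n, a n ≠ ⊥ ∧ a n ≤ b n) ∧
        ∀ m n : ℕ, m ≠ n → a m ⊓ a n = ⊥ := by
  classical
  intro b hb
  have key : ∀ s : B, (∀ m, b m \ s ≠ ⊥) → ∀ n : ℕ,
      ∃ a : B, a ≠ ⊥ ∧ a ≤ b n \ s ∧ ∀ m, b m \ (s ⊔ a) ≠ ⊥ := by
    intro s hs n
    by_contra h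
    push_neg at h
    apply hnopibase (b n \ s) (bot_lt_iff_ne_bot.mpr (hs n))
    refine ⟨{c | (∃ m, c = b m \ s) ∧ c ≤ b n \ s}, ?_, ?_, ?_⟩
    · exact (Set.countable_range (fun m => b m \ s)).mono
        (fun c hc => by obtain ⟨⟨m, rfl⟩, _⟩ := hc; exact ⟨m, rfl⟩)
    · rintro c ⟨⟨m, rfl⟩, hle⟩
      exact ⟨bot_lt_iff_ne_bot.mpr (hs m), hle⟩
    · intro c hc hcle
      obtain ⟨m, hm⟩ := h c hc.ne' hcle
      have hle : b m \ s ≤ c := by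
        have : (b m \ s) \ c = ⊥ := by rw [sdiff_sdiff]; exact hm
        exact sdiff_eq_bot_iff.mp this
      exact ⟨b m \ s, ⟨⟨m, rfl⟩, hle.trans hcle⟩, hle⟩
  -- recursive construction
  let S := {s : B // ∀ m, b m \ s ≠ ⊥}
  have s0 : S := ⟨⊥, by intro m; simpa using hb m⟩
  let step : ℕ → S → B := fun n s => (key s.1 s.2 n).choose
  have step_spec : ∀ n (s : S), step n s ≠ ⊥ ∧ step n s ≤ b n \ s.1 ∧
      ∀ m, b m \ (s.1 ⊔ step n s) ≠ ⊥ := fun n s => (key s.1 s.2 n).choose_spec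
  let next : ℕ → S → S := fun n s => ⟨s.1 ⊔ step n s, (step_spec n s).2.2⟩
  let g : ℕ → S := fun n => Nat.rec s0 (fun k s => next k s) n
  have hg : ∀ n, g (n + 1) = next n (g n) := fun n => rfl
  let a : ℕ → B := fun n => step n (g n)
  have ha1 : ∀ n, a n ≠ ⊥ := fun n => (step_spec n (g n)).1
  have ha2 : ∀ n, a n ≤ b n \ (g n).1 := fun n => (step_spec n (g n)).2.1
  have hsucc : ∀ n, (g (n + 1)).1 = (g n).1 ⊔ a n := fun n => by rw [hg]
  have hmono : ∀ m n : ℕ, m ≤ n → (g m).1 ≤ (g n).1 := by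
    intro m n hmn
    induction n with
    | zero => simp [Nat.le_zero.mp hmn]
    | succ k ih =>
      rcases Nat.lt_or_ge m (k + 1) with h | h
      · exact (ih (Nat.lt_succ_iff.mp h)).trans (by rw [hsucc]; exact le_sup_left)
      · have : m = k + 1 := le_antisymm hmn h
        simp [this]
  have hdisj : ∀ m n : ℕ, m < n → a m ⊓ a n = ⊥ := by
    intro m n hmn
    have h1 : a m ≤ (g n).1 := by
      have : a m ≤ (g (m + 1)).1 := by rw [hsucc]; exact le_sup_right
      exact this.trans (hmono _ _ hmn)
    have h2 : a n ≤ ((g n).1)ᶜ := (ha2 n).trans (by rw [sdiff_eq]; exact inf_le_right)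
    exact le_bot_iff.mp (le_trans (inf_le_inf h1 h2) (by simp))
  refine ⟨a, fun n => ⟨ha1 n, (ha2 n).trans sdiff_le⟩, ?_⟩
  intro m n hmn
  rcases Nat.lt_or_ge m n with h | h
  · exact hdisj m n h
  · rw [inf_comm]
    exact hdisj n m (lt_of_le_of_ne h (Ne.symm hmn))
end

section
/- Let X be an Archimedean vector lattice. If there exist sequences (a_n), (b_n) in X₊ such that X₊ \ {0} = ⋃_n [a_n, b_n], then the Boolean algebra of bands of X has a countable π-base; in fact {a_n^dd : n ∈ ℕ} is such a π-base (discarding those with a_n = 0). -/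
/-- Disjoint complement of a set in a vector lattice. -/
def dSet {X : Type*} [AddCommGroup X] [Lattice X] (S : Set X) : Set X :=
  {y | ∀ s ∈ S, |y| ⊓ |s| = 0}

/-- The band generated by a set: the double disjoint complement. -/
def ddSet {X : Type*} [AddCommGroup X] [Lattice X] (S : Set X) : Set X :=
  dSet (dSet S)

/-- A band in a vector lattice: a solid linear subspace closed under existing suprema. -/
def IsBand {X : Type*} [AddCommGroup X] [Lattice X] [Module ℝ X] (B : Set X) : Prop :=
  (0 : X) ∈ B ∧ (∀ x ∈ B, ∀ y ∈ B, x + y ∈ B) ∧ (∀ (c : ℝ), ∀ x ∈ B, c • x ∈ B) ∧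
    (∀ x ∈ B, ∀ y : X, |y| ≤ |x| → y ∈ B) ∧
    ∀ A ⊆ B, ∀ s : X, IsLUB A s → s ∈ B

/-!
A nonzero band `B` contains some `|x| ≠ 0`, and `a n ≤ |x| ≤ b n` for some `n`; then `a n` is a
positive element of `B` by solidity. So it suffices that a band containing `a ≥ 0` contains
`a^dd`. For `0 ≤ y ∈ a^dd` the Archimedean property gives `y = sup_n (y ⊓ n • a)`: if `u` bounds
these truncations, then `v = y - u ⊓ y` satisfies `n • (v ⊓ a) ≤ y` for all `n`, so `v ⊥ a`,
hence `v ⊥ y`, and `v ≤ y` forces `v = 0`. The truncations lie in `B` by solidity, and bands are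
closed under existing suprema.
-/

section Disjointness

variable {X : Type*} [AddCommGroup X] [Lattice X]

lemma self_mem_ddSet_singleton (a : X) : a ∈ ddSet {a} := fun s hs => by
  rw [inf_comm]
  exact hs a rfl

variable [AddLeftMono X]

lemma eq_zero_of_abs_eq_zero {x : X} (hx : |x| = 0) : x = 0 :=
  le_antisymm ((le_abs_self x).trans hx.le) (neg_nonpos.1 ((neg_le_abs x).trans hx.le))

lemma mem_dSet_of_abs_le {S : Set X} {y z : X} (hz : z ∈ dSet S) (hyz : |y| ≤ |z|) :
    y ∈ dSet S := fun s hs =>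
  le_antisymm ((inf_le_inf_right _ hyz).trans_eq (hz s hs)) (le_inf (abs_nonneg y) (abs_nonneg s))

lemma mem_dSet_singleton_of_inf_eq_zero {v a : X} (hv : 0 ≤ v) (ha : 0 ≤ a) (hva : v ⊓ a = 0) :
    v ∈ dSet {a} := by
  rintro s rfl
  rwa [abs_of_nonneg hv, abs_of_nonneg ha]

lemma nsmul_inf_le_inf_nsmul {v y a : X} (hy : 0 ≤ y) (hv : ∀ n : ℕ, v + y ⊓ n • a ≤ y) :
    ∀ n : ℕ, n • (v ⊓ a) ≤ y ⊓ n • a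
  | 0 => by simp [hy]
  | n + 1 => by
    rw [succ_nsmul, succ_nsmul]
    refine le_inf ?_
      (add_le_add ((nsmul_inf_le_inf_nsmul hy hv n).trans inf_le_right) inf_le_right)
    calc n • (v ⊓ a) + v ⊓ a ≤ y ⊓ n • a + v :=
          add_le_add (nsmul_inf_le_inf_nsmul hy hv n) inf_le_left
      _ ≤ y := by rw [add_comm]; exact hv n

lemma isLUB_range_inf_nsmul (harch : ∀ x y : X, (∀ n : ℕ, n • x ≤ y) → x ≤ 0)
    {a y : X} (ha : 0 ≤ a) (hy : 0 ≤ y) (hya : y ∈ ddSet {a}) :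
    IsLUB (Set.range fun n : ℕ => y ⊓ n • a) y := by
  refine ⟨Set.forall_mem_range.2 fun _ => inf_le_left, fun u hu => ?_⟩
  have hu0 : 0 ≤ u := by simpa [inf_of_le_right hy] using hu ⟨0, rfl⟩
  set v := y - u ⊓ y
  have hv : 0 ≤ v := sub_nonneg.2 inf_le_right
  have hbound : ∀ n : ℕ, v + y ⊓ n • a ≤ y := fun n => by
    rw [← le_sub_iff_add_le', sub_sub_cancel]
    exact le_inf (hu ⟨n, rfl⟩) inf_le_left
  have hva : v ⊓ a = 0 :=
    le_antisymm (harch _ y fun n => (nsmul_inf_le_inf_nsmul hy hbound n).trans inf_le_left)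
      (le_inf hv ha)
  have hyv : y ⊓ v = 0 := by
    simpa [abs_of_nonneg hy, abs_of_nonneg hv] using
      hya v (mem_dSet_singleton_of_inf_eq_zero hv ha hva)
  have hv0 : v = 0 := le_antisymm (hyv ▸ le_inf (sub_le_self y (le_inf hu0 hy)) le_rfl) hv
  rw [sub_eq_zero] at hv0
  exact hv0.le.trans inf_le_left

end Disjointness

namespace IsBand

variable {X : Type*} [AddCommGroup X] [Lattice X] [Module ℝ X] {B : Set X}

lemma mem_of_abs_le (hB : IsBand B) {x y : X} (hx : x ∈ B) (hyx : |y| ≤ |x|) : y ∈ B :=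
  hB.2.2.2.1 x hx y hyx

lemma nsmul_mem (hB : IsBand B) {x : X} (hx : x ∈ B) (n : ℕ) : n • x ∈ B := by
  simpa only [Nat.cast_smul_eq_nsmul] using hB.2.2.1 n x hx

lemma sub_mem (hB : IsBand B) {x y : X} (hx : x ∈ B) (hy : y ∈ B) : x - y ∈ B := by
  simpa only [neg_one_smul, sub_eq_add_neg] using hB.2.1 x hx _ (hB.2.2.1 (-1) y hy)

lemma exists_ne_zero (hB : IsBand B) (hB0 : B ≠ {0}) : ∃ x ∈ B, x ≠ 0 := by
  by_contra! h
  exact hB0 (Set.eq_singleton_iff_unique_mem.2 ⟨hB.1, h⟩)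

variable [AddLeftMono X]

lemma nonneg_mem_of_mem_ddSet (harch : ∀ x y : X, (∀ n : ℕ, n • x ≤ y) → x ≤ 0)
    (hB : IsBand B) {a y : X} (ha : 0 ≤ a) (haB : a ∈ B) (hy : 0 ≤ y) (hya : y ∈ ddSet {a}) :
    y ∈ B := by
  refine hB.2.2.2.2 _ ?_ y (isLUB_range_inf_nsmul harch ha hy hya)
  rintro _ ⟨n, rfl⟩
  refine hB.mem_of_abs_le (hB.nsmul_mem haB n) ?_
  rw [abs_of_nonneg (le_inf hy (nsmul_nonneg ha n)), abs_of_nonneg (nsmul_nonneg ha n)]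
  exact inf_le_right

lemma ddSet_singleton_subset (harch : ∀ x y : X, (∀ n : ℕ, n • x ≤ y) → x ≤ 0)
    (hB : IsBand B) {a : X} (ha : 0 ≤ a) (haB : a ∈ B) : ddSet {a} ⊆ B := by
  intro y hy
  have hpos : y⁺ ∈ ddSet {a} := mem_dSet_of_abs_le hy <| by
    rw [abs_of_nonneg (posPart_nonneg y)]
    exact sup_le (le_abs_self y) (abs_nonneg y)
  have hneg : y⁻ ∈ ddSet {a} := mem_dSet_of_abs_le hy <| by
    rw [abs_of_nonneg (negPart_nonneg y)]
    exact sup_le (neg_le_abs y) (abs_nonneg y)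
  rw [← posPart_sub_negPart y]
  exact hB.sub_mem (hB.nonneg_mem_of_mem_ddSet harch ha haB (posPart_nonneg y) hpos)
    (hB.nonneg_mem_of_mem_ddSet harch ha haB (negPart_nonneg y) hneg)

end IsBand

theorem stmt13_general {X : Type*} [AddCommGroup X] [Lattice X]
    [CovariantClass X X (· + ·) (· ≤ ·)] [Module ℝ X]
    (harch : ∀ x y : X, (∀ n : ℕ, n • x ≤ y) → x ≤ 0)
    (a b : ℕ → X)
    (hcover : {x : X | 0 ≤ x ∧ x ≠ 0} = ⋃ n : ℕ, Set.Icc (a n) (b n)) :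
    -- {a_n^dd : a_n ≠ 0} is a countable π-base of the Boolean algebra of bands:
    -- every nonzero band contains some nonzero band a_n^dd
    ∀ B : Set X, IsBand B → B ≠ ({0} : Set X) →
      ∃ n : ℕ, a n ≠ 0 ∧ ddSet {a n} ⊆ B ∧ ddSet {a n} ≠ ({0} : Set X) := by
  intro B hB hB0
  obtain ⟨x, hxB, hx0⟩ := hB.exists_ne_zero hB0
  have habs : |x| ∈ {x : X | 0 ≤ x ∧ x ≠ 0} :=
    ⟨abs_nonneg x, fun h => hx0 (eq_zero_of_abs_eq_zero h)⟩
  rw [hcover] at habs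
  obtain ⟨n, han, hbn⟩ := Set.mem_iUnion.1 habs
  -- `a n` lies in its own interval `[a n, b n]`, which consists of positive elements
  obtain ⟨ha0, hane⟩ : a n ∈ {x : X | 0 ≤ x ∧ x ≠ 0} :=
    hcover ▸ Set.mem_iUnion.2 ⟨n, le_rfl, han.trans hbn⟩
  have hanB : a n ∈ B := hB.mem_of_abs_le hxB (by rwa [abs_of_nonneg ha0])
  refine ⟨n, hane, hB.ddSet_singleton_subset harch ha0 hanB, fun h => hane ?_⟩
  simpa [h] using self_mem_ddSet_singleton (a n)

theorem stmt13 {X : Type*} [AddCommGroup X] [Lattice X]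
    [CovariantClass X X (· + ·) (· ≤ ·)] [Module ℝ X] [PosSMulMono ℝ X]
    (harch : ∀ x y : X, (∀ n : ℕ, n • x ≤ y) → x ≤ 0)
    (a b : ℕ → X) (ha : ∀ n, 0 ≤ a n) (hb : ∀ n, 0 ≤ b n)
    (hcover : {x : X | 0 ≤ x ∧ x ≠ 0} = ⋃ n : ℕ, Set.Icc (a n) (b n)) :
    -- {a_n^dd : a_n ≠ 0} is a countable π-base of the Boolean algebra of bands:
    -- every nonzero band contains some nonzero band a_n^dd
    ∀ B : Set X, IsBand B → B ≠ ({0} : Set X) →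
      ∃ n : ℕ, a n ≠ 0 ∧ ddSet {a n} ⊆ B ∧ ddSet {a n} ≠ ({0} : Set X) :=
  stmt13_general harch a b hcover
end

section
/- In the vector lattice c of convergent real sequences, define v_n ∈ c by v_n(k) = 1/n for k ≤ n and v_n(k) = n for k > n, and let C = {v_n : n ∈ ℕ}. Then for every sequence (x_k) in c with x_k ↓ 0 there exists D ⊆ C with inf D = 0 such that every d ∈ D dominates some x_k; indeed D = {v_n : n ≥ ‖x_1‖_∞} works. -/
/-- The vector lattice `c` of convergent real sequences (as a subset of `ℕ → ℝ`,
with the pointwise order). -/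
def convSeqs : Set (ℕ → ℝ) :=
  {f | ∃ L : ℝ, Filter.Tendsto f Filter.atTop (nhds L)}

/-- `v_n(k) = 1/n` for `k ≤ n` and `v_n(k) = n` for `k > n`. -/
noncomputable def vSeq (n : ℕ) : ℕ → ℝ := fun k => if k ≤ n then 1 / (n : ℝ) else (n : ℝ)

theorem stmt14 (x : ℕ → (ℕ → ℝ)) (hx : ∀ k, x k ∈ convSeqs)
    -- x_k ↓ 0 in c: decreasing, nonnegative, with infimum 0 within convSeqs
    (hdec : ∀ k, x (k + 1) ≤ x k) (hpos : ∀ k, 0 ≤ x k)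
    (hinf : ∀ g ∈ convSeqs, (∀ k, g ≤ x k) → g ≤ 0) :
    ∃ D : Set (ℕ → ℝ),
      D ⊆ {f | ∃ n : ℕ, 1 ≤ n ∧ f = vSeq n} ∧
      -- inf D = 0 within convSeqs
      (∀ d ∈ D, (0 : ℕ → ℝ) ≤ d) ∧
      (∀ g ∈ convSeqs, (∀ d ∈ D, g ≤ d) → g ≤ 0) ∧
      -- every member of D dominates some x_k
      (∀ d ∈ D, ∃ k : ℕ, x k ≤ d) ∧
      -- indeed D = {v_n : n ≥ ‖x_1‖_∞} works
      D = {f | ∃ n : ℕ, 1 ≤ n ∧ (∀ j : ℕ, x 0 j ≤ (n : ℝ)) ∧ f = vSeq n} := by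
  have hanti : Antitone x := antitone_nat_of_succ_le hdec
  -- pointwise infimum is zero
  have hpt : ∀ j : ℕ, ∀ ε : ℝ, 0 < ε → ∃ k, x k j ≤ ε := by
    intro j ε hε
    by_contra h
    push_neg at h
    set g : ℕ → ℝ := fun j' => if j' = j then ε else 0 with hg
    have hgc : g ∈ convSeqs := by
      refine ⟨0, ?_⟩
      apply Filter.Tendsto.congr' _ tendsto_const_nhds
      filter_upwards [Filter.eventually_gt_atTop j] with j' hj'
      simp [hg, Nat.ne_of_gt hj']
    have hle : ∀ k, g ≤ x k := by
      intro k j'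
      by_cases hjj : j' = j
      · subst hjj; simpa [hg] using (h k).le
      · simpa [hg, hjj] using hpos k j'
    have := hinf g hgc hle j
    simp [hg] at this
    linarith
  -- finitely many coordinates can simultaneously be made small
  have hfin : ∀ (c : ℝ), 0 < c → ∀ m : ℕ, ∃ k, ∀ j < m, x k j ≤ c := by
    intro c hc m
    induction m with
    | zero => exact ⟨0, fun j hj => absurd hj (Nat.not_lt_zero j)⟩
    | succ m ih =>
      obtain ⟨k1, hk1⟩ := ih
      obtain ⟨k2, hk2⟩ := hpt m c hc
      refine ⟨max k1 k2, fun j hj => ?_⟩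
      rcases Nat.lt_succ_iff_lt_or_eq.mp hj with h | rfl
      · exact le_trans (hanti (le_max_left k1 k2) j) (hk1 j h)
      · exact le_trans (hanti (le_max_right k1 k2) j) hk2
  -- x 0 is bounded above
  obtain ⟨L, hL⟩ := hx 0
  obtain ⟨M, hM⟩ := hL.bddAbove_range
  have hMb : ∀ j, x 0 j ≤ M := fun j => hM ⟨j, rfl⟩
  refine ⟨{f | ∃ n : ℕ, 1 ≤ n ∧ (∀ j : ℕ, x 0 j ≤ (n : ℝ)) ∧ f = vSeq n}, ?_, ?_, ?_, ?_, rfl⟩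
  · rintro f ⟨n, hn, -, rfl⟩
    exact ⟨n, hn, rfl⟩
  · rintro d ⟨n, hn, -, rfl⟩
    intro j
    simp only [vSeq, Pi.zero_apply]
    split <;> positivity
  · rintro g hgc hg j
    have key : ∀ n : ℕ, max (max 1 j) ⌈M⌉₊ ≤ n → g j ≤ 1 / (n : ℝ) := by
      intro n hn
      have h1 : 1 ≤ n := le_trans (le_trans (le_max_left 1 j) (le_max_left _ _)) hn
      have hjn : j ≤ n := le_trans (le_trans (le_max_right 1 j) (le_max_left _ _)) hn
      have hMn : (M : ℝ) ≤ n := by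
        calc M ≤ (⌈M⌉₊ : ℝ) := Nat.le_ceil M
        _ ≤ n := by exact_mod_cast le_trans (le_max_right _ _) hn
      have hmem : vSeq n ∈ {f | ∃ n : ℕ, 1 ≤ n ∧ (∀ j : ℕ, x 0 j ≤ (n : ℝ)) ∧ f = vSeq n} :=
        ⟨n, h1, fun j' => le_trans (hMb j') hMn, rfl⟩
      have := hg _ hmem j
      simpa [vSeq, hjn] using this
    have : Filter.Tendsto (fun n : ℕ => 1 / (n : ℝ)) Filter.atTop (nhds 0) :=
      tendsto_one_div_atTop_nhds_zero_nat
    exact ge_of_tendsto this (Filter.eventually_atTop.mpr ⟨_, key⟩)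
  · rintro d ⟨n, hn, hbd, rfl⟩
    have hpos' : (0 : ℝ) < 1 / n := by
      have : (0 : ℝ) < n := by exact_mod_cast hn
      positivity
    obtain ⟨k, hk⟩ := hfin (1 / n) hpos' (n + 1)
    refine ⟨k, fun j => ?_⟩
    simp only [vSeq]
    split
    · exact hk j (by omega)
    · exact le_trans (hanti (Nat.zero_le k) j) (hbd j)
end

section
/- Let K be a compact Hausdorff space and g_k ↓ 0 a decreasing sequence in C(K) with infimum 0. Then for every nonempty open set U ⊆ K and every ε > 0 there exist a nonempty open set V ⊆ U and k ∈ ℕ such that g_k(t) ≤ ε for all t ∈ V. -/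
theorem stmt15 {K : Type*} [TopologicalSpace K] [CompactSpace K] [T2Space K]
    (g : ℕ → C(K, ℝ)) (hdec : Antitone g)
    (hinf : IsGLB (Set.range g) (0 : C(K, ℝ))) :
    ∀ U : Set K, IsOpen U → U.Nonempty → ∀ ε : ℝ, 0 < ε →
      ∃ V : Set K, IsOpen V ∧ V.Nonempty ∧ V ⊆ U ∧
        ∃ k : ℕ, ∀ t ∈ V, g k t ≤ ε := by
  intro U hU hne ε hε
  by_cases h : ∃ k, ∃ t ∈ U, g k t < ε
  · obtain ⟨k, t, htU, ht⟩ := h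
    refine ⟨U ∩ {x | g k x < ε},
      hU.inter (isOpen_lt (map_continuous (g k)) continuous_const),
      ⟨t, htU, ht⟩, Set.inter_subset_left, k, fun x hx => le_of_lt hx.2⟩
  · push_neg at h
    exfalso
    obtain ⟨t0, ht0⟩ := hne
    obtain ⟨f, hf0, hf1, hfrange⟩ := exists_continuous_zero_one_of_isClosed
      (isClosed_compl_iff.mpr hU) (isClosed_singleton (x := t0))
      (Set.disjoint_singleton_right.mpr (by simpa using ht0))
    have hlb : (ε • f) ∈ lowerBounds (Set.range g) := by
      rintro _ ⟨k, rfl⟩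
      rw [ContinuousMap.le_def]
      intro x
      by_cases hx : x ∈ U
      · have h1 : (ε • f) x = ε * f x := rfl
        have : ε * f x ≤ ε * 1 := by
          have := (hfrange x).2
          nlinarith
        have := h k x hx
        simp only [ContinuousMap.smul_apply, smul_eq_mul]
        linarith
      · have hfx : f x = 0 := hf0 hx
        have hg : (0 : C(K, ℝ)) ≤ g k := hinf.1 (Set.mem_range_self k)
        have := hg x
        simp only [ContinuousMap.smul_apply, smul_eq_mul, hfx, mul_zero]
        simpa using this
    have hle := hinf.2 hlb
    have hft0 : f t0 = 1 := hf1 rfl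
    have h2 : (ε • f) t0 ≤ (0 : C(K, ℝ)) t0 := hle t0
    simp only [ContinuousMap.smul_apply, smul_eq_mul, hft0, mul_one,
      ContinuousMap.zero_apply] at h2
    linarith
end

section
/- Let K be a compact Hausdorff space with a countable π-base. Then there exists a countable set C ⊆ C(K)₊ such that for every decreasing sequence g_k ↓ 0 in C(K) there is D ⊆ C with inf D = 0 such that for each d ∈ D there exists k with g_k ≤ d. -/
open Set

theorem stmt16 {K : Type*} [TopologicalSpace K] [CompactSpace K] [T2Space K]
    -- K has a countable π-base
    (hpibase : ∃ P : Set (Set K), P.Countable ∧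
        (∀ p ∈ P, IsOpen p ∧ p.Nonempty) ∧
        ∀ U : Set K, IsOpen U → U.Nonempty → ∃ p ∈ P, p ⊆ U) :
    ∃ C : Set C(K, ℝ), C.Countable ∧ (∀ f ∈ C, 0 ≤ f) ∧
      ∀ g : ℕ → C(K, ℝ), Antitone g → IsGLB (Set.range g) (0 : C(K, ℝ)) →
        ∃ D ⊆ C, IsGLB D (0 : C(K, ℝ)) ∧ ∀ d ∈ D, ∃ k : ℕ, g k ≤ d := by
  classical
  obtain ⟨P, hPc, hPprop, hPbase⟩ := hpibase
  haveI : Countable P := hPc.to_subtype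
  -- choose, for each p ∈ P, an open V with closure V ⊆ p and a Urysohn function
  have hchoice : ∀ pp : P, ∃ (V : Set K) (f : C(K, ℝ)),
      V.Nonempty ∧ closure V ⊆ pp.1 ∧
      (∀ x, x ∉ pp.1 → f x = 0) ∧ (∀ x ∈ V, f x = 1) ∧ ∀ x, f x ∈ Icc (0:ℝ) 1 := by
    rintro ⟨p, hp⟩
    obtain ⟨hpo, x, hxp⟩ := hPprop p hp
    obtain ⟨V, hVo, hxV, hVc⟩ := normal_exists_closure_subset isClosed_singleton hpo
      (by simpa using hxp)
    obtain ⟨f, hf0, hf1, hf01⟩ := exists_continuous_zero_one_of_isClosed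
      (isClosed_compl_iff.mpr hpo) isClosed_closure
      (disjoint_compl_left_iff_subset.mpr (hVc.trans (subset_refl p)))
    refine ⟨V, f, ⟨x, hxV rfl⟩, hVc, fun y hy => hf0 hy, fun y hy => hf1 (subset_closure hy), hf01⟩
  choose V f hVne hVc hf0 hf1 hf01 using hchoice
  -- the countable set C
  set F : P × ℚ × ℕ → C(K, ℝ) :=
    fun x => (x.2.1 : ℝ) • (1 : C(K, ℝ)) + (x.2.2 : ℝ) • (1 - f x.1) with hF
  set C : Set C(K, ℝ) := F '' {x | 0 < x.2.1} with hC
  have hFapp : ∀ (pp : P) (q : ℚ) (m : ℕ) (y : K),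
      F (pp, q, m) y = q + m * (1 - f pp y) := by
    intro pp q m y
    simp [hF, smul_eq_mul]
  have hCnn : ∀ d ∈ C, (0 : C(K, ℝ)) ≤ d := by
    rintro d ⟨⟨pp, q, m⟩, hq, rfl⟩
    rw [ContinuousMap.le_def]
    intro y
    rw [ContinuousMap.zero_apply, hFapp]
    have h1 := (hf01 pp y).2
    have hq' : (0:ℝ) < q := by exact_mod_cast hq
    have hm : (0:ℝ) ≤ m := Nat.cast_nonneg m
    nlinarith
  refine ⟨C, (Set.to_countable _).image F, hCnn, ?_⟩
  intro g hg hglb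
  have hg0 : ∀ k, (0 : C(K, ℝ)) ≤ g k := fun k => hglb.1 ⟨k, rfl⟩
  refine ⟨{d | d ∈ C ∧ ∃ k, g k ≤ d}, fun d hd => hd.1, ⟨fun d hd => hCnn d hd.1, ?_⟩,
    fun d hd => hd.2⟩
  intro h hh
  rw [ContinuousMap.le_def]
  intro x
  rw [ContinuousMap.zero_apply]
  -- key: h ≤ q everywhere for every positive rational q
  have key : ∀ q : ℚ, 0 < q → ∀ y, h y ≤ (q : ℝ) := by
    intro q hq
    have hq' : (0:ℝ) < q := by exact_mod_cast hq
    have hZc : IsClosed {y | h y ≤ (q:ℝ)} := isClosed_le h.continuous continuous_const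
    have hZd : Dense {y | h y ≤ (q:ℝ)} := by
      rw [dense_iff_inter_open]
      intro U hU hUne
      set W : Set K := {y | ∃ k, g k y < (q:ℝ)} with hWdef
      have hWo : IsOpen W := by
        have : W = ⋃ k, {y | g k y < (q:ℝ)} := by ext y; simp [hWdef]
        rw [this]
        exact isOpen_iUnion fun k => isOpen_lt (g k).continuous continuous_const
      -- W meets U (else a nonzero lower bound of range g exists)
      have hUW : (U ∩ W).Nonempty := by
        by_contra hcon
        rw [Set.not_nonempty_iff_eq_empty] at hcon
        have hWc : ∀ y ∈ U, ∀ k, (q:ℝ) ≤ g k y := by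
          intro y hy k
          by_contra hlt
          have : y ∈ U ∩ W := ⟨hy, k, lt_of_not_ge hlt⟩
          rw [hcon] at this
          exact this
        obtain ⟨p0, hp0P, hp0U⟩ := hPbase U hU hUne
        set pp0 : P := ⟨p0, hp0P⟩
        have hlb : (q:ℝ) • f pp0 ∈ lowerBounds (Set.range g) := by
          rintro _ ⟨k, rfl⟩
          rw [ContinuousMap.le_def]
          intro y
          rw [ContinuousMap.smul_apply, smul_eq_mul]
          by_cases hyp : y ∈ p0
          · have h1 := hWc y (hp0U hyp) k
            have h2 := (hf01 pp0 y).2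
            nlinarith
          · rw [hf0 pp0 y hyp, mul_zero]
            exact ContinuousMap.le_def.mp (hg0 k) y
        have hle0 := hglb.2 hlb
        obtain ⟨x1, hx1⟩ := hVne pp0
        have h3 : (q:ℝ) * f pp0 x1 ≤ 0 := by
          have := ContinuousMap.le_def.mp hle0 x1
          simpa [smul_eq_mul] using this
        rw [hf1 pp0 x1 hx1, mul_one] at h3
        linarith
      obtain ⟨p, hpP, hpUW⟩ := hPbase (U ∩ W) (hU.inter hWo) hUW
      set pp : P := ⟨p, hpP⟩
      set S : Set K := (f pp) ⁻¹' {1} with hSdef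
      have hSc : IsClosed S := IsClosed.preimage (f pp).continuous isClosed_singleton
      have hScpt : IsCompact S := hSc.isCompact
      have hSp : S ⊆ p := by
        intro y hy
        by_contra hyp
        have := hf0 pp y hyp
        rw [Set.mem_preimage, Set.mem_singleton_iff] at hy
        rw [this] at hy
        norm_num at hy
      have hSW : S ⊆ W := fun y hy => (hpUW (hSp hy)).2
      -- a single k with g k < q on S
      have hcov : S ⊆ ⋃ k, {y | g k y < (q:ℝ)} := by
        intro y hy
        obtain ⟨k, hk⟩ := hSW hy
        exact Set.mem_iUnion.mpr ⟨k, hk⟩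
      obtain ⟨t, ht⟩ := hScpt.elim_finite_subcover _
        (fun k => isOpen_lt (g k).continuous continuous_const) hcov
      set k : ℕ := t.sup id with hkdef
      have hkS : ∀ y ∈ S, g k y < (q:ℝ) := by
        intro y hy
        obtain ⟨i, hit, hiy⟩ := Set.mem_iUnion₂.mp (ht hy)
        have hik : i ≤ k := Finset.le_sup (f := id) hit
        exact lt_of_le_of_lt (ContinuousMap.le_def.mp (hg hik) y) hiy
      -- pick m with g k ≤ q + m (1 - f pp)
      have hm : ∃ m : ℕ, ∀ y, g k y ≤ (q:ℝ) + m * (1 - f pp y) := by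
        set T : Set K := {y | (q:ℝ) ≤ g k y} with hTdef
        have hTc : IsClosed T := isClosed_le continuous_const (g k).continuous
        rcases T.eq_empty_or_nonempty with hTe | hTne
        · refine ⟨0, fun y => ?_⟩
          have hyT : y ∉ T := by rw [hTe]; exact Set.notMem_empty y
          have : g k y < (q:ℝ) := lt_of_not_ge hyT
          have := (hf01 pp y).2
          push_cast
          nlinarith
        · obtain ⟨z, hzT, hz⟩ := hTc.isCompact.exists_isMaxOn hTne (f pp).continuous.continuousOn
          have hzS : z ∉ S := fun hzS => absurd (hkS z hzS) (not_lt.mpr hzT)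
          have hz1 : f pp z < 1 := lt_of_le_of_ne ((hf01 pp z).2) (fun h => hzS h)
          set δ : ℝ := 1 - f pp z with hδdef
          have hδ : 0 < δ := by simp [hδdef]; linarith
          have hKne : Nonempty K := ⟨hUne.choose⟩
          obtain ⟨w, -, hw⟩ := isCompact_univ.exists_isMaxOn Set.univ_nonempty
            (g k).continuous.continuousOn
          set M : ℝ := g k w with hMdef
          have hM : ∀ y, g k y ≤ M := fun y => hw (Set.mem_univ y)
          have hM0 : 0 ≤ M := le_trans (ContinuousMap.le_def.mp (hg0 k) w) (le_refl _)
          refine ⟨⌈M / δ⌉₊, fun y => ?_⟩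
          have hmδ : M ≤ (⌈M / δ⌉₊ : ℝ) * δ := by
            have := Nat.le_ceil (M / δ)
            calc M = (M / δ) * δ := by field_simp
            _ ≤ (⌈M / δ⌉₊ : ℝ) * δ := by nlinarith
          by_cases hyT : y ∈ T
          · have h1 : f pp y ≤ f pp z := hz hyT
            have h2 : δ ≤ 1 - f pp y := by simp [hδdef]; linarith
            have h3 := hM y
            have hmn : (0:ℝ) ≤ (⌈M / δ⌉₊ : ℝ) := Nat.cast_nonneg _
            nlinarith
          · have h1 : g k y < (q:ℝ) := lt_of_not_ge hyT
            have h2 := (hf01 pp y).2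
            have hmn : (0:ℝ) ≤ (⌈M / δ⌉₊ : ℝ) := Nat.cast_nonneg _
            nlinarith
      obtain ⟨m, hmle⟩ := hm
      set d : C(K, ℝ) := F (pp, q, m) with hddef
      have hdD : d ∈ {d | d ∈ C ∧ ∃ k, g k ≤ d} := by
        refine ⟨⟨(pp, q, m), hq, rfl⟩, k, ?_⟩
        rw [ContinuousMap.le_def]
        intro y
        rw [hddef, hFapp]
        exact hmle y
      have hhd := hh hdD
      obtain ⟨x1, hx1⟩ := hVne pp
      have hx1p : x1 ∈ p := hVc pp (subset_closure hx1)
      refine ⟨x1, (hpUW hx1p).1, ?_⟩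
      have : h x1 ≤ d x1 := ContinuousMap.le_def.mp hhd x1
      rw [hddef, hFapp, hf1 pp x1 hx1] at this
      simpa using this
    intro y
    have hy : y ∈ closure {y | h y ≤ (q:ℝ)} := hZd y
    rwa [hZc.closure_eq] at hy
  by_contra hpos
  push_neg at hpos
  obtain ⟨q, hq1, hq2⟩ := exists_rat_btwn hpos
  have hq0 : 0 < q := by exact_mod_cast hq1
  exact absurd (key q hq0 x) (not_le.mpr hq2)
end

section
/- Let Y be a super order dense majorizing sublattice of an Archimedean vector lattice X, and (y_α) a net in Y. Then (y_α) σ-order converges to 0 in Y if and only if it σ-order converges to 0 in X. -/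
theorem stmt18 {X : Type*} [AddCommGroup X] [Lattice X]
    [CovariantClass X X (· + ·) (· ≤ ·)] [Module ℝ X] [PosSMulMono ℝ X]
    (harch : ∀ x y : X, (∀ n : ℕ, n • x ≤ y) → x ≤ 0)
    (Y : Set X)
    -- Y is a (vector) sublattice
    (hzero : (0 : X) ∈ Y)
    (hadd : ∀ x ∈ Y, ∀ y ∈ Y, x + y ∈ Y)
    (hsmul : ∀ (c : ℝ), ∀ x ∈ Y, c • x ∈ Y)
    (hsupcl : ∀ x ∈ Y, ∀ y ∈ Y, x ⊔ y ∈ Y)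
    (hinfcl : ∀ x ∈ Y, ∀ y ∈ Y, x ⊓ y ∈ Y)
    -- Y is majorizing
    (hmaj : ∀ x : X, ∃ y ∈ Y, x ≤ y)
    -- Y is super order dense
    (hsdense : ∀ x : X, 0 < x →
        ∃ A ⊆ Y, A.Countable ∧ A ⊆ {z : X | 0 ≤ z} ∧ IsLUB A x)
    {A : Type*} [Preorder A] [Nonempty A]
    (hdir : ∀ a b : A, ∃ c : A, a ≤ c ∧ b ≤ c)
    (y : A → X) (hy : ∀ α, y α ∈ Y) :
    -- (y_α) σ-order converges to 0 in Y
    (∃ u : ℕ → X, (∀ n, u n ∈ Y) ∧ (∀ n, 0 ≤ u n) ∧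
        (∀ z ∈ Y, (∀ n, z ≤ u n) → z ≤ 0) ∧
        ∀ n : ℕ, ∃ α₀ : A, ∀ α : A, α₀ ≤ α → |y α| ≤ u n) ↔
    -- (y_α) σ-order converges to 0 in X
    (∃ u : ℕ → X, (∀ n, 0 ≤ u n) ∧ IsGLB (Set.range u) 0 ∧
        ∀ n : ℕ, ∃ α₀ : A, ∀ α : A, α₀ ≤ α → |y α| ≤ u n) := by
  constructor
  · rintro ⟨u, huY, hupos, hinfY, hbd⟩
    refine ⟨u, hupos, ⟨?_, ?_⟩, hbd⟩
    · rintro x ⟨n, rfl⟩; exact hupos n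
    · intro z hz
      have hz' : ∀ n, z ≤ u n := fun n => hz ⟨n, rfl⟩
      by_cases h0 : z ⊔ 0 = 0
      · calc z ≤ z ⊔ 0 := le_sup_left
          _ = 0 := h0
      · have hpos : 0 < z ⊔ 0 := lt_of_le_of_ne le_sup_right (Ne.symm h0)
        obtain ⟨B, hBY, hBc, hBpos, hlub⟩ := hsdense _ hpos
        have hub : (0 : X) ∈ upperBounds B := by
          intro a ha
          exact hinfY a (hBY ha)
            (fun n => le_trans (hlub.1 ha) (sup_le (hz' n) (hupos n)))
        calc z ≤ z ⊔ 0 := le_sup_left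
          _ ≤ 0 := hlub.2 hub
  · rintro ⟨u, hupos, hglb, hbd⟩
    have key : ∀ n, ∃ g : ℕ → X, (∀ k, g k ∈ Y) ∧ (∀ k, u n ≤ g k) ∧
        (∀ z, (∀ k, z ≤ g k) → z ≤ u n) := by
      intro n
      obtain ⟨w, hwY, hw⟩ := hmaj (u n)
      rcases eq_or_lt_of_le hw with heq | hlt
      · exact ⟨fun _ => w, fun _ => hwY, fun _ => hw, fun z hz => heq ▸ hz 0⟩
      · have hd : 0 < w - u n := sub_pos.mpr hlt
        obtain ⟨B, hBY, hBc, hBpos, hlub⟩ := hsdense _ hd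
        have hBne : B.Nonempty := by
          by_contra h
          rw [Set.not_nonempty_iff_eq_empty] at h
          subst h
          exact absurd (hlub.2 (fun a ha => absurd ha (Set.notMem_empty a)))
            hd.not_ge
        obtain ⟨f, hf⟩ := hBc.exists_eq_range hBne
        have hfmem : ∀ k, f k ∈ B := fun k => hf ▸ Set.mem_range_self k
        refine ⟨fun k => w - f k, ?_, ?_, ?_⟩
        · intro k
          have : w + (-1 : ℝ) • f k ∈ Y := hadd w hwY _ (hsmul (-1) _ (hBY (hfmem k)))
          simpa [neg_one_smul, sub_eq_add_neg] using this
        · intro k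
          exact le_sub_comm.mp (hlub.1 (hfmem k))
        · intro z hz
          have hub : w - z ∈ upperBounds B := by
            intro a ha
            obtain ⟨k, rfl⟩ : ∃ k, f k = a := by
              have := ha
              rw [hf] at this
              obtain ⟨k, hk⟩ := this
              exact ⟨k, hk⟩
            exact le_sub_comm.mp (hz k)
          have := hlub.2 hub
          exact (sub_le_sub_iff_left w).mp this
    choose g hgY hgle hginf using key
    refine ⟨fun m => g m.unpair.1 m.unpair.2, fun m => hgY _ _,
      fun m => le_trans (hupos _) (hgle _ _), ?_, ?_⟩
    · intro z hzY hz
      have hzu : ∀ n, z ≤ u n := fun n =>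
        hginf n z (fun k => by simpa [Nat.unpair_pair] using hz (Nat.pair n k))
      refine hglb.2 ?_
      rintro x ⟨n, rfl⟩
      exact hzu n
    · intro m
      obtain ⟨α₀, hα⟩ := hbd m.unpair.1
      exact ⟨α₀, fun α hle => le_trans (hα α hle) (hgle _ _)⟩
end

section
/- Let X be an Archimedean vector lattice with a countable π-base A ⊆ X₊ \ {0}. Then the rational span Y of A is order dense in the sense that every x > 0 in X satisfies x = sup(Y ∩ [0,x]). -/
theorem stmt19 {X : Type*} [AddCommGroup X] [Lattice X]
    [CovariantClass X X (· + ·) (· ≤ ·)] [Module ℝ X] [PosSMulMono ℝ X]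
    (harch : ∀ x y : X, (∀ n : ℕ, n • x ≤ y) → x ≤ 0)
    (A : Set X)
    -- A is a countable π-base of X: A ⊆ X₊ \ {0} and every 0 < x dominates a member
    (hcount : A.Countable)
    (hApos : ∀ a ∈ A, 0 < a)
    (hpibase : ∀ x : X, 0 < x → ∃ a ∈ A, a ≤ x) :
    -- the rational span Y of A is order dense: x = sup (Y ∩ [0, x]) for every x > 0
    ∀ x : X, 0 < x →
      IsLUB ({s : X | ∃ (n : ℕ) (q : Fin n → ℚ) (f : Fin n → X),
          (∀ i, f i ∈ A) ∧ s = ∑ i, (q i : ℝ) • f i} ∩ Set.Icc 0 x) x := by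
  intro x hx
  constructor
  · rintro s ⟨-, hs⟩
    exact hs.2
  · intro b hb
    by_contra hxb
    have hlt : x ⊓ b < x := lt_of_le_of_ne inf_le_left (fun h => hxb (inf_eq_left.mp h))
    have hd : 0 < x - x ⊓ b := sub_pos.mpr hlt
    obtain ⟨a, haA, had⟩ := hpibase _ hd
    have hapos : 0 < a := hApos a haA
    have key : ∀ n : ℕ, n • a ≤ x := by
      intro n
      induction n with
      | zero => simpa using hx.le
      | succ n ih =>
        have hmem : (n • a : X) ∈ ({s : X | ∃ (m : ℕ) (q : Fin m → ℚ) (f : Fin m → X),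
            (∀ i, f i ∈ A) ∧ s = ∑ i, (q i : ℝ) • f i} ∩ Set.Icc 0 x) := by
          refine ⟨⟨1, fun _ => (n : ℚ), fun _ => a, fun _ => haA, ?_⟩,
            nsmul_nonneg hapos.le n, ih⟩
          simp [Nat.cast_smul_eq_nsmul]
        have hnb : n • a ≤ b := hb hmem
        have hinf : n • a ≤ x ⊓ b := le_inf ih hnb
        calc (n + 1) • a = n • a + a := succ_nsmul a n
          _ ≤ (x ⊓ b) + (x - x ⊓ b) := add_le_add hinf had
          _ = x := by abel
    exact absurd (harch a x key) hapos.not_ge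
end
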